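/- Energy estimate for the homotopy family: for each λ ∈ [0,1], any solution (u_λ, w_λ) of the λ-scaled velocity-vorticity system satisfies ‖u_λ‖_* ≤ √2·λ·α₊^{-1/2}·‖f‖ ≤ √2·α₊^{-1/2}·‖f‖, i.e., the velocity a priori bound is uniform in λ. Abstractly: if α X² + ν Y² ≤ λ G·min{X, C_P Y} with λ ∈ [0,1], X, Y, G ≥ 0, then (αX² + νY²)^{1/2} ≤ √2 α₊^{-1/2} G where α₊ = max{α, C_P^{-2}ν}. -/
import Mathlib


theorem homotopy_energy_estimate (α ν C_P lam X Y G : ℝ)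
    (hα : 0 ≤ α) (hν : 0 < ν) (hCP : 0 < C_P)
    (hlam : lam ∈ Set.Icc (0 : ℝ) 1)
    (hX : 0 ≤ X) (hY : 0 ≤ Y) (hG : 0 ≤ G)
    (h : α * X ^ 2 + ν * Y ^ 2 ≤ lam * G * min X (C_P * Y)) :
    Real.sqrt (α * X ^ 2 + ν * Y ^ 2) ≤
      Real.sqrt 2 * (max α (C_P ^ (-2 : ℝ) * ν)) ^ (-(1 : ℝ) / 2) * G := by
  obtain ⟨hl0, hl1⟩ := hlam
  set E := α * X ^ 2 + ν * Y ^ 2 with hE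
  set m := min X (C_P * Y) with hm
  have hm0 : 0 ≤ m := le_min hX (by positivity)
  have hCP2 : C_P ^ (-2 : ℝ) = (C_P ^ 2)⁻¹ := by
    rw [show (-2 : ℝ) = -(2:ℕ) by push_cast; ring, Real.rpow_neg hCP.le,
      Real.rpow_natCast]
  set A := max α (C_P ^ (-2 : ℝ) * ν) with hA
  have hApos : 0 < A := lt_max_of_lt_right (by rw [hCP2]; positivity)
  -- E ≥ A m²
  have hEm : A * m ^ 2 ≤ E := by
    rcases max_cases α (C_P ^ (-2 : ℝ) * ν) with ⟨hAe, _⟩ | ⟨hAe, _⟩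
    · have h1 : m ^ 2 ≤ X ^ 2 := by
        have := min_le_left X (C_P * Y)
        nlinarith
      nlinarith [mul_nonneg hν.le (sq_nonneg Y)]
    · have h1 : m ^ 2 ≤ (C_P * Y) ^ 2 := by
        have := min_le_right X (C_P * Y)
        nlinarith [mul_nonneg hCP.le hY]
      have h2 : C_P ^ (-2 : ℝ) * ν * m ^ 2 ≤ ν * Y ^ 2 := by
        rw [hCP2]
        have hh := mul_le_mul_of_nonneg_left h1
          (by positivity : (0:ℝ) ≤ (C_P ^ 2)⁻¹ * ν)
        calc (C_P ^ 2)⁻¹ * ν * m ^ 2 ≤ (C_P ^ 2)⁻¹ * ν * (C_P * Y) ^ 2 := hh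
        _ = ν * Y ^ 2 := by field_simp
      nlinarith [mul_nonneg hα (sq_nonneg X)]
  have hEGm : E ≤ G * m := by
    calc E ≤ lam * G * m := h
    _ ≤ 1 * G * m := by
        apply mul_le_mul_of_nonneg_right (mul_le_mul_of_nonneg_right hl1 hG) hm0
    _ = G * m := by ring
  have hEnn : 0 ≤ E := by positivity
  have key : E * A ≤ G ^ 2 := by
    rcases eq_or_lt_of_le hm0 with hmz | hmz
    · have : E ≤ 0 := by rw [← hmz] at hEGm; simpa using hEGm
      nlinarith
    · have hAmG : A * m ≤ G := by
        have : A * m * m ≤ G * m := by nlinarith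
        exact le_of_mul_le_mul_right (by linarith [this]) hmz
      nlinarith
  -- translate the rpow
  have hpow : A ^ (-(1 : ℝ) / 2) = (Real.sqrt A)⁻¹ := by
    rw [show (-(1:ℝ)/2) = -(1/2) by ring, Real.rpow_neg hApos.le,
      ← Real.sqrt_eq_rpow]
  rw [hpow]
  have hsA : 0 < Real.sqrt A := Real.sqrt_pos.mpr hApos
  have h1 : Real.sqrt E ≤ (Real.sqrt A)⁻¹ * G := by
    rw [inv_mul_eq_div, le_div_iff₀ hsA]
    calc Real.sqrt E * Real.sqrt A = Real.sqrt (E * A) :=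
          (Real.sqrt_mul hEnn A).symm
    _ ≤ Real.sqrt (G ^ 2) := Real.sqrt_le_sqrt key
    _ = G := Real.sqrt_sq hG
  have h2 : (Real.sqrt A)⁻¹ * G ≤ Real.sqrt 2 * ((Real.sqrt A)⁻¹ * G) := by
    nlinarith [Real.one_le_sqrt.mpr (by norm_num : (1:ℝ) ≤ 2),
      mul_nonneg (inv_nonneg.mpr hsA.le) hG]
  calc Real.sqrt E ≤ (Real.sqrt A)⁻¹ * G := h1
  _ ≤ Real.sqrt 2 * ((Real.sqrt A)⁻¹ * G) := h2
  _ = Real.sqrt 2 * (Real.sqrt A)⁻¹ * G := by ring
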